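/- For positive integers n, m, r, k with k < n, the number of permutations σ of [n] with exactly m r-excedances, σ(n) = k, and σ⁻¹(n) = i (for any fixed i with n − r < i < n) equals the number of permutations of [n−1] with exactly m r-excedances ending in k. -/

import Mathlib

/-- Number of `r`-descents of a permutation `σ` of `[n]` (positions `i < n` with
`σ(i) ≥ σ(i+1) + r`), encoded on `Fin n`. -/
def rDesc (n r : ℕ) (σ : Equiv.Perm (Fin n)) : ℕ :=
  (Finset.univ.filter fun i : Fin n =>
    (if h : (i : ℕ) + 1 < n then ((σ ⟨(i : ℕ) + 1, h⟩ : Fin n) : ℕ) else n) + r ≤ (σ i : ℕ)).card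

/-- Number of `r`-excedances of a permutation `σ` of `[n]` (positions `i ≤ n` with
`σ(i) ≥ i + r`), encoded on `Fin n`. -/
def rExc (n r : ℕ) (σ : Equiv.Perm (Fin n)) : ℕ :=
  (Finset.univ.filter fun i : Fin n => (i : ℕ) + r ≤ (σ i : ℕ)).card

/-- The last value `σ(n)` of a permutation of `[n]` (as an element of `{1,…,n}`). -/
def lastVal (n : ℕ) (σ : Equiv.Perm (Fin n)) : ℕ :=
  if h : 0 < n then ((σ ⟨n - 1, Nat.sub_lt h Nat.one_pos⟩ : Fin n) : ℕ) + 1 else 0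

/-- `Ar r n m k` = number of permutations of `[n]` with exactly `m` `r`-descents
whose last value is `k`. -/
def Ar (r n m k : ℕ) : ℕ :=
  (Finset.univ.filter fun σ : Equiv.Perm (Fin n) => rDesc n r σ = m ∧ lastVal n σ = k).card

/-- The position (in `{1,…,n}`) of the value `n` in `σ`. -/
def posTop (n : ℕ) (σ : Equiv.Perm (Fin n)) : ℕ :=
  if h : 0 < n then ((σ⁻¹ ⟨n - 1, Nat.sub_lt h Nat.one_pos⟩ : Fin n) : ℕ) + 1 else 0

/-!
The value `n` at position `i > n - r` is not an `r`-excedance, and every `r`-excedance `j` of `σ`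
has `j + r ≤ σ(j) ≤ n - 1`, hence `j < i`. So deleting the entry `n` from `σ` and closing the
gap changes neither the `r`-excedances nor (as `i < n`) the last value, and it is a bijection onto
the permutations of `[n - 1]`; its inverse inserts `n` at position `i`.
-/

open Finset

namespace Equiv.Perm

variable {n : ℕ}

def insertAt (p q : Fin (n + 1)) (π : Perm (Fin n)) : Perm (Fin (n + 1)) :=
  (finSuccEquiv' p).trans (π.optionCongr.trans (finSuccEquiv' q).symm)

@[simp]
theorem insertAt_apply_self (p q : Fin (n + 1)) (π : Perm (Fin n)) : insertAt p q π p = q := by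
  simp [insertAt, finSuccEquiv'_at]

@[simp]
theorem insertAt_apply_succAbove (p q : Fin (n + 1)) (π : Perm (Fin n)) (j : Fin n) :
    insertAt p q π (p.succAbove j) = q.succAbove (π j) := by
  simp [insertAt, finSuccEquiv'_succAbove]

theorem insertAt_injective (p q : Fin (n + 1)) : Function.Injective (insertAt p q) := by
  intro π π' h
  exact Equiv.ext fun j => by simpa using congr($h (p.succAbove j))

theorem exists_insertAt_eq {p q : Fin (n + 1)} {σ : Perm (Fin (n + 1))} (h : σ p = q) :
    ∃ π, insertAt p q π = σ := by
  set e := (finSuccEquiv' p).symm.trans (σ.trans (finSuccEquiv' q))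
  have he_none : e none = none := by simp [e, h, finSuccEquiv'_at]
  have he : e.removeNone.optionCongr = e := by
    ext x : 1
    cases x <;> simp [he_none]
  refine ⟨e.removeNone, ?_⟩
  ext x : 1
  simp [insertAt, he, e]

theorem card_filter_and_apply_eq (p q : Fin (n + 1)) (Q : Perm (Fin (n + 1)) → Prop)
    [DecidablePred Q] :
    #{σ | Q σ ∧ σ p = q} = #{π : Perm (Fin n) | Q (insertAt p q π)} := by
  symm
  refine card_nbij (insertAt p q) (fun π hπ => ?_) (insertAt_injective p q).injOn fun σ hσ => ?_
  · simpa using hπ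
  · simp only [coe_filter, mem_univ, true_and, Set.mem_ofPred_eq] at hσ
    obtain ⟨π, rfl⟩ := exists_insertAt_eq hσ.2
    exact ⟨π, by simpa using hσ.1, rfl⟩

end Equiv.Perm

open Equiv

section

variable {n : ℕ}

theorem rExc_insertAt_last {r : ℕ} {p : Fin (n + 1)} (hp : n < p + r) (π : Perm (Fin n)) :
    rExc (n + 1) r (π.insertAt p (Fin.last n)) = rExc n r π := by
  unfold rExc
  symm
  refine card_nbij p.succAbove (fun j hj => ?_) p.succAbove_right_injective.injOn fun x hx => ?_
  · simp only [coe_filter, mem_univ, true_and, Set.mem_ofPred_eq] at hj ⊢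
    have hjp : j.castSucc < p := by
      rw [Fin.lt_def, Fin.val_castSucc]
      omega
    rw [Perm.insertAt_apply_succAbove, Fin.succAbove_last_apply,
      Fin.succAbove_of_castSucc_lt _ _ hjp, Fin.val_castSucc, Fin.val_castSucc]
    exact hj
  · simp only [coe_filter, mem_univ, true_and, Set.mem_ofPred_eq] at hx
    have hxp : x ≠ p := by
      rintro rfl
      simp only [Perm.insertAt_apply_self, Fin.val_last] at hx
      omega
    obtain ⟨j, rfl⟩ := Fin.exists_succAbove_eq hxp
    refine ⟨j, ?_, rfl⟩
    have hj : (j : ℕ) ≤ p.succAbove j := by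
      rcases Fin.castSucc_lt_or_lt_succ p j with h | h
      · simp [Fin.succAbove_of_castSucc_lt _ _ h]
      · simp [Fin.succAbove_of_lt_succ _ _ h]
    simp only [Perm.insertAt_apply_succAbove, Fin.succAbove_last, Fin.val_castSucc, coe_filter,
      mem_univ, true_and, Set.mem_ofPred_eq] at hx ⊢
    omega

theorem lastVal_succ (σ : Perm (Fin (n + 1))) : lastVal (n + 1) σ = σ (Fin.last n) + 1 := rfl

theorem lastVal_insertAt_last {p : Fin (n + 2)} (hp : p ≠ Fin.last (n + 1))
    (π : Perm (Fin (n + 1))) :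
    lastVal (n + 2) (π.insertAt p (Fin.last (n + 1))) = lastVal (n + 1) π := by
  have h := π.insertAt_apply_succAbove p (Fin.last (n + 1)) (Fin.last n)
  rw [Fin.succAbove_ne_last_last hp, Fin.succAbove_last_apply] at h
  rw [lastVal_succ, lastVal_succ, h, Fin.val_castSucc]

theorem posTop_succ_eq_iff (σ : Perm (Fin (n + 1))) (p : Fin (n + 1)) :
    posTop (n + 1) σ = p + 1 ↔ σ p = Fin.last n := by
  rw [posTop, dif_pos n.succ_pos, Nat.add_right_cancel_iff, Fin.val_inj, Perm.inv_eq_iff_eq]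
  exact eq_comm

end

theorem stmt6_general (n m r k i : ℕ) (hi₁ : n - r < i) (hi₂ : i < n) :
    (Finset.univ.filter fun σ : Equiv.Perm (Fin n) =>
        rExc n r σ = m ∧ lastVal n σ = k ∧ posTop n σ = i).card =
    (Finset.univ.filter fun σ : Equiv.Perm (Fin (n - 1)) =>
        rExc (n - 1) r σ = m ∧ lastVal (n - 1) σ = k).card := by
  obtain ⟨n, rfl⟩ : ∃ n', n = n' + 2 := ⟨n - 2, by omega⟩
  obtain ⟨p, rfl⟩ : ∃ p : Fin (n + 2), i = p + 1 := ⟨⟨i - 1, by omega⟩, by dsimp only; omega⟩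
  have hpr : n + 1 < p + r := by omega
  have hp : p ≠ Fin.last (n + 1) := by
    rw [Ne, Fin.ext_iff, Fin.val_last]
    omega
  simp only [posTop_succ_eq_iff, ← and_assoc]
  rw [Perm.card_filter_and_apply_eq]
  simp only [rExc_insertAt_last hpr, lastVal_insertAt_last hp]
  rfl

/-- For `n - r < i < n` and `k < n`: the permutations of `[n]` with `m` `r`-excedances,
last value `k`, and `σ⁻¹(n) = i` are equinumerous with the permutations of `[n-1]` with
`m` `r`-excedances ending in `k`. -/
theorem stmt6 (n m r k i : ℕ) (hn : 1 ≤ n) (hm : 1 ≤ m) (hr : 1 ≤ r) (hk : 1 ≤ k)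
    (hkn : k < n) (hi₁ : n - r < i) (hi₂ : i < n) :
    (Finset.univ.filter fun σ : Equiv.Perm (Fin n) =>
        rExc n r σ = m ∧ lastVal n σ = k ∧ posTop n σ = i).card =
    (Finset.univ.filter fun σ : Equiv.Perm (Fin (n - 1)) =>
        rExc (n - 1) r σ = m ∧ lastVal (n - 1) σ = k).card :=
  stmt6_general n m r k i hi₁ hi₂
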